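/- arXiv:2306.15827 — 4 statements merged into one kernel-verified Lean document; each statement's English description precedes it below -/
import Mathlib

section
/- The number of binary tree topologies with n ≥ 1 distinguishable (labeled) leaves is (2n-3)!! (the double factorial), where (−1)!! = 1 for n = 1. -/
/-- Rooted binary trees with leaves labelled by `α`. -/
inductive BT (α : Type) : Type
  | leaf : α → BT α
  | node : BT α → BT α → BT α

namespace BT

/-- The multiset of leaf labels of a binary tree. -/
def leaves {α : Type} : BT α → Multiset α
  | .leaf a => {a}
  | .node l r => l.leaves + r.leaves

/-- Two binary trees are equivalent as *unordered* topologies if one can be obtained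
from the other by swapping the children of internal nodes. -/
inductive Equiv {α : Type} : BT α → BT α → Prop
  | refl (t : BT α) : Equiv t t
  | symm {s t : BT α} : Equiv s t → Equiv t s
  | trans {s t u : BT α} : Equiv s t → Equiv t u → Equiv s u
  | swap (l r : BT α) : Equiv (.node l r) (.node r l)
  | congr {l l' r r' : BT α} :
      Equiv l l' → Equiv r r' → Equiv (.node l r) (.node l' r')

end BT

/-- Binary trees whose leaves are exactly the `n` labels `{0, ..., n-1}` (each once),
regarded up to reordering of children: these are the binary tree topologies with `n`
distinguishable leaves. -/
def labTreeSetoid (n : ℕ) :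
    Setoid {t : BT (Fin n) // t.leaves = (Finset.univ : Finset (Fin n)).1} :=
  ⟨fun a b => BT.Equiv a.1 b.1,
    ⟨fun a => BT.Equiv.refl a.1, BT.Equiv.symm, BT.Equiv.trans⟩⟩

/-!
Count ordered trees first. Grafting a new leaf onto a tree with `k` leaves can be done on any
of its `2k - 1` edges (the root edge included), to the left or to the right, and deleting the
leaf undoes this; so there are `2^(n-1) (2n-3)!!` ordered trees with `n` distinct leaves.
Because the labels are distinct, swapping children at any subset of the `n - 1` internal nodes
gives pairwise different ordered trees, so each topology has exactly `2^(n-1)` of them.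
-/

theorem Nat.card_eq_card_mul_of_card_fiber {X Y : Type*} [Finite Y] (f : X → Y) {k : ℕ}
    (hk : k ≠ 0) (hf : ∀ y, Nat.card {x // f x = y} = k) : Nat.card X = Nat.card Y * k := by
  have := Fintype.ofFinite Y
  have (y : Y) : Finite {x // f x = y} := Nat.finite_of_card_ne_zero (hf y ▸ hk)
  rw [Nat.card_congr (Equiv.sigmaFiberEquiv f).symm, Nat.card_sigma]
  simp [hf, Nat.card_eq_fintype_card]

open scoped Nat

deriving instance DecidableEq for BT

namespace BT

variable {α : Type}

theorem card_leaves_pos (t : BT α) : 0 < Multiset.card t.leaves := by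
  induction t with
  | leaf a => simp [leaves]
  | node l r ihl ihr => simp only [leaves, Multiset.card_add]; omega

theorem leaves_ne_zero (t : BT α) : t.leaves ≠ 0 :=
  Multiset.card_pos.mp t.card_leaves_pos

theorem leaves_eq_of_equiv {s t : BT α} (h : Equiv s t) : s.leaves = t.leaves := by
  induction h with
  | refl => rfl
  | symm _ ih => exact ih.symm
  | trans _ _ ih₁ ih₂ => exact ih₁.trans ih₂
  | swap l r => exact add_comm _ _
  | congr _ _ ihl ihr => simp [leaves, ihl, ihr]

theorem leaves_eq_singleton_iff {t : BT α} {a : α} : t.leaves = {a} ↔ t = leaf a := by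
  refine ⟨fun h => ?_, fun h => h ▸ rfl⟩
  cases t with
  | leaf b => simpa [leaves] using h
  | node l r =>
    have := congrArg Multiset.card h
    simp only [leaves, Multiset.card_add, Multiset.card_singleton] at this
    have := l.card_leaves_pos
    have := r.card_leaves_pos
    omega

/-- The trees obtained by grafting a new leaf `a` onto an edge of `t` (the root edge included),
to the left or to the right. -/
def ins (a : α) (t : BT α) : List (BT α) :=
  node (leaf a) t :: node t (leaf a) :: match t with
    | leaf _ => []
    | node l r => (ins a l).map (node · r) ++ (ins a r).map (node l ·)

theorem length_ins (a : α) (t : BT α) :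
    (ins a t).length = 2 * (2 * Multiset.card t.leaves - 1) := by
  induction t with
  | leaf b => simp [ins, leaves]
  | node l r ihl ihr =>
    have := l.card_leaves_pos
    have := r.card_leaves_pos
    simp only [ins, List.length_cons, List.length_append, List.length_map, ihl, ihr, leaves,
      Multiset.card_add]
    omega

theorem leaves_of_mem_ins {a : α} {t t' : BT α} (h : t' ∈ ins a t) :
    t'.leaves = a ::ₘ t.leaves := by
  induction t generalizing t' with
  | leaf b =>
    simp only [ins, List.mem_cons, List.not_mem_nil, or_false] at h
    rcases h with rfl | rfl <;> simp [leaves, add_comm _ ({a} : Multiset α)]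
  | node l r ihl ihr =>
    simp only [ins, List.mem_cons, List.mem_append, List.mem_map] at h
    rcases h with rfl | rfl | ⟨x, hx, rfl⟩ | ⟨y, hy, rfl⟩
    · simp [leaves]
    · simp [leaves, add_comm _ ({a} : Multiset α)]
    · simp [leaves, ihl hx]
    · simp [leaves, ihr hy]

theorem leaf_notMem_ins (a b : α) (t : BT α) : leaf b ∉ ins a t := fun h => by
  have := congrArg Multiset.card (leaves_of_mem_ins h)
  simp only [leaves, Multiset.card_singleton, Multiset.card_cons] at this
  have := t.card_leaves_pos
  omega

theorem nodup_ins {a : α} {t : BT α} (ha : a ∉ t.leaves) : (ins a t).Nodup := by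
  induction t with
  | leaf b =>
    simp_all [ins, leaves, eq_comm]
  | node l r ihl ihr =>
    simp only [leaves, Multiset.mem_add, not_or] at ha
    have hl : l ≠ leaf a := by rintro rfl; simp [leaves] at ha
    have hr : r ≠ leaf a := by rintro rfl; simp [leaves] at ha
    have disj : ∀ x ∈ ins a l, x ≠ l := fun x hx h => ha.1 <| by
      rw [← h, leaves_of_mem_ins hx]; exact Multiset.mem_cons_self a _
    simp only [ins, List.nodup_cons, List.mem_cons, List.mem_append, List.mem_map, node.injEq]
    refine ⟨?_, ?_, ?_⟩
    · simp [hl, leaf_notMem_ins]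
    · simp [hr, leaf_notMem_ins]
    · refine List.nodup_append.mpr ⟨(ihl ha.1).map fun _ _ h => (node.inj h).1,
        (ihr ha.2).map fun _ _ h => (node.inj h).2, ?_⟩
      simp only [List.mem_map]
      rintro _ ⟨x, hx, rfl⟩ _ ⟨y, -, rfl⟩ h
      exact disj x hx (node.inj h).1

variable [DecidableEq α]

/-- Removes the leaf `a` and lets its sibling take the place of their parent; this inverts
`ins a` on trees in which `a` occurs once. -/
def del (a : α) : BT α → BT α
  | leaf b => leaf b
  | node l r => if l = leaf a then r else if r = leaf a then l else node (del a l) (del a r)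

theorem del_eq_self {a : α} {t : BT α} (ha : a ∉ t.leaves) : del a t = t := by
  induction t with
  | leaf b => rfl
  | node l r ihl ihr =>
    simp only [leaves, Multiset.mem_add, not_or] at ha
    have hl : l ≠ leaf a := by rintro rfl; simp [leaves] at ha
    have hr : r ≠ leaf a := by rintro rfl; simp [leaves] at ha
    rw [del, if_neg hl, if_neg hr, ihl ha.1, ihr ha.2]

theorem del_of_mem_ins {a : α} {t t' : BT α} (ha : a ∉ t.leaves) (h : t' ∈ ins a t) :
    del a t' = t := by
  induction t generalizing t' with
  | leaf b =>
    have hb : b ≠ a := by rintro rfl; simp [leaves] at ha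
    simp only [ins, List.mem_cons, List.not_mem_nil, or_false] at h
    rcases h with rfl | rfl <;> simp [del, hb]
  | node l r ihl ihr =>
    simp only [leaves, Multiset.mem_add, not_or] at ha
    have hl : l ≠ leaf a := by rintro rfl; simp [leaves] at ha
    have hr : r ≠ leaf a := by rintro rfl; simp [leaves] at ha
    simp only [ins, List.mem_cons, List.mem_append, List.mem_map] at h
    rcases h with rfl | rfl | ⟨x, hx, rfl⟩ | ⟨y, hy, rfl⟩
    · simp [del]
    · simp [del]
    · have hx' : x ≠ leaf a := fun h => leaf_notMem_ins a a l (h ▸ hx)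
      rw [del, if_neg hx', if_neg hr, ihl ha.1 hx, del_eq_self ha.2]
    · have hy' : y ≠ leaf a := fun h => leaf_notMem_ins a a r (h ▸ hy)
      rw [del, if_neg hl, if_neg hy', ihr ha.2 hy, del_eq_self ha.1]

theorem mem_ins_del {a : α} {t : BT α} (h : t.leaves.count a = 1) (ht : ∀ b, t ≠ leaf b) :
    t ∈ ins a (del a t) := by
  induction t with
  | leaf b => exact absurd rfl (ht b)
  | node l r ihl ihr =>
    simp only [leaves, Multiset.count_add] at h
    obtain ⟨hl, hr⟩ | ⟨hl, hr⟩ : l.leaves.count a = 1 ∧ r.leaves.count a = 0 ∨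
        l.leaves.count a = 0 ∧ r.leaves.count a = 1 := by omega
    · have hr' : r ≠ leaf a := by rintro rfl; simp [leaves] at hr
      cases l with
      | leaf b =>
        obtain rfl : a = b := by simpa [leaves, Multiset.count_singleton] using hl
        rw [del, if_pos rfl, ins.eq_def]
        exact List.mem_cons_self
      | node l₁ l₂ =>
        rw [del, if_neg nofun, if_neg hr', del_eq_self (Multiset.count_eq_zero.mp hr)]
        simp [ins, ihl hl nofun]
    · have hl' : l ≠ leaf a := by rintro rfl; simp [leaves] at hl
      cases r with
      | leaf b =>
        obtain rfl : a = b := by simpa [leaves, Multiset.count_singleton] using hr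
        rw [del, if_neg hl', if_pos rfl, ins.eq_def]
        exact List.mem_cons_of_mem _ List.mem_cons_self
      | node r₁ r₂ =>
        rw [del, if_neg hl', if_neg nofun, del_eq_self (Multiset.count_eq_zero.mp hl)]
        simp [ins, ihr hr nofun]

theorem mem_ins_del_of_leaves_eq_cons {a : α} {s : Multiset α} {t : BT α} (ha : a ∉ s)
    (hs : s ≠ 0) (h : t.leaves = a ::ₘ s) : t ∈ ins a (del a t) := by
  refine mem_ins_del (by simp [h, Multiset.count_eq_zero.mpr ha]) fun b hb => hs ?_
  simpa [hb, leaves] using congrArg Multiset.card h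

theorem leaves_del {a : α} {s : Multiset α} {t : BT α} (ha : a ∉ s) (hs : s ≠ 0)
    (h : t.leaves = a ::ₘ s) : (del a t).leaves = s :=
  (Multiset.cons_inj_right a).mp <|
    (leaves_of_mem_ins (mem_ins_del_of_leaves_eq_cons ha hs h)).symm.trans h

theorem mem_ins_iff {a : α} {t t' : BT α} (ha : a ∉ t.leaves) :
    t' ∈ ins a t ↔ t'.leaves = a ::ₘ t.leaves ∧ del a t' = t :=
  ⟨fun h => ⟨leaves_of_mem_ins h, del_of_mem_ins ha h⟩,
    fun ⟨hl, hd⟩ => hd ▸ mem_ins_del_of_leaves_eq_cons ha t.leaves_ne_zero hl⟩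

theorem card_subtype_leaves_eq_cons {a : α} {s : Multiset α} (ha : a ∉ s) (hs : s ≠ 0)
    [Finite {t : BT α // t.leaves = s}] :
    Nat.card {t : BT α // t.leaves = a ::ₘ s} =
      Nat.card {t : BT α // t.leaves = s} * (2 * (2 * Multiset.card s - 1)) := by
  have hpos := Multiset.card_pos.mpr hs
  refine Nat.card_eq_card_mul_of_card_fiber (fun t => ⟨del a t.1, leaves_del ha hs t.2⟩)
    (by omega) ?_
  rintro ⟨t, rfl⟩
  calc _ = Nat.card {t' // t' ∈ ins a t} := Nat.card_congr <|
        (Equiv.subtypeEquivRight (q := fun t' => t'.1 ∈ ins a t) fun t' => by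
          rw [mem_ins_iff ha, Subtype.ext_iff]; simp [t'.2]).trans
        (Equiv.subtypeSubtypeEquivSubtype leaves_of_mem_ins)
    _ = (ins a t).length := by
      rw [← List.toFinset_card_of_nodup (nodup_ins ha), ← Nat.card_eq_finsetCard]; simp
    _ = _ := length_ins a t

theorem card_subtype_leaves_eq {m : ℕ} {s : Multiset α} (hs : s.Nodup)
    (hcard : Multiset.card s = m + 1) :
    Nat.card {t : BT α // t.leaves = s} = 2 ^ m * (2 * m - 1)‼ := by
  induction m generalizing s with
  | zero =>
    obtain ⟨a, rfl⟩ := Multiset.card_eq_one.mp hcard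
    simp [leaves_eq_singleton_iff]
  | succ m ih =>
    obtain ⟨a, ha⟩ := Multiset.card_pos_iff_exists_mem.mp (show 0 < Multiset.card s by omega)
    obtain ⟨s, rfl⟩ := Multiset.exists_cons_of_mem ha
    rw [Multiset.nodup_cons] at hs
    rw [Multiset.card_cons, Nat.add_right_cancel_iff] at hcard
    have ih := ih hs.2 hcard
    have : Finite {t : BT α // t.leaves = s} := Nat.finite_of_card_ne_zero (by rw [ih]; positivity)
    have hs0 : s ≠ 0 := Multiset.card_pos.mp (by omega)
    rw [card_subtype_leaves_eq_cons hs.1 hs0, ih, hcard, show 2 * (m + 1) - 1 = 2 * m + 1 by omega,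
      Nat.doubleFactorial_add_one]
    ring

def flips : BT α → Finset (BT α)
  | leaf a => {leaf a}
  | node l r =>
    Finset.image₂ node (flips l) (flips r) ∪ Finset.image₂ node (flips r) (flips l)

theorem mem_flips_self (t : BT α) : t ∈ flips t := by
  induction t with
  | leaf a => simp [flips]
  | node l r ihl ihr => exact Finset.mem_union_left _ (Finset.mem_image₂_of_mem ihl ihr)

theorem flips_eq_of_equiv {s t : BT α} (h : Equiv s t) : flips s = flips t := by
  induction h with
  | refl => rfl
  | symm _ ih => exact ih.symm
  | trans _ _ ih₁ ih₂ => exact ih₁.trans ih₂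
  | swap l r => exact Finset.union_comm _ _
  | congr _ _ ihl ihr => simp only [flips, ihl, ihr]

theorem equiv_of_mem_flips {s t : BT α} (h : s ∈ flips t) : Equiv s t := by
  induction t generalizing s with
  | leaf a => simp only [flips, Finset.mem_singleton] at h; exact h ▸ .refl _
  | node l r ihl ihr =>
    simp only [flips, Finset.mem_union, Finset.mem_image₂] at h
    rcases h with ⟨x, hx, y, hy, rfl⟩ | ⟨y, hy, x, hx, rfl⟩
    · exact .congr (ihl hx) (ihr hy)
    · exact .trans (.congr (ihr hy) (ihl hx)) (.swap _ _)

theorem equiv_iff_mem_flips {s t : BT α} : Equiv s t ↔ s ∈ flips t :=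
  ⟨fun h => flips_eq_of_equiv h ▸ mem_flips_self s, equiv_of_mem_flips⟩

theorem card_flips {t : BT α} (ht : t.leaves.Nodup) :
    (flips t).card = 2 ^ (Multiset.card t.leaves - 1) := by
  induction t with
  | leaf a => simp [flips, leaves]
  | node l r ihl ihr =>
    obtain ⟨hl, hr, hlr⟩ := Multiset.nodup_add.mp ht
    have hnode : Function.Injective2 (@node α) := fun _ _ _ _ h => node.inj h
    have hdisj : Disjoint (Finset.image₂ node (flips l) (flips r))
        (Finset.image₂ node (flips r) (flips l)) := by
      simp only [Finset.disjoint_left, Finset.mem_image₂]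
      rintro _ ⟨x, hx, y, hy, rfl⟩ ⟨y', hy', x', -, h⟩
      obtain ⟨a, ha⟩ := Multiset.exists_mem_of_ne_zero l.leaves_ne_zero
      have hxy : l.leaves = r.leaves := by
        rw [← leaves_eq_of_equiv (equiv_of_mem_flips hx), ← (node.inj h).1,
          leaves_eq_of_equiv (equiv_of_mem_flips hy')]
      exact Multiset.disjoint_left.mp hlr ha (hxy ▸ ha)
    obtain ⟨i, hi⟩ := Nat.exists_eq_add_one_of_ne_zero l.card_leaves_pos.ne'
    obtain ⟨j, hj⟩ := Nat.exists_eq_add_one_of_ne_zero r.card_leaves_pos.ne'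
    rw [flips, Finset.card_union_of_disjoint hdisj, Finset.card_image₂ hnode,
      Finset.card_image₂ hnode, ihl hl, ihr hr, leaves, Multiset.card_add, hi, hj,
      show i + 1 + (j + 1) - 1 = i + j + 1 by omega, add_tsub_cancel_right, add_tsub_cancel_right]
    ring

theorem card_equiv_class {s : Multiset α} (hs : s.Nodup) (t : {t : BT α // t.leaves = s}) :
    Nat.card {u : {t : BT α // t.leaves = s} // Equiv u.1 t.1} = 2 ^ (Multiset.card s - 1) := by
  rw [Nat.card_congr (Equiv.subtypeSubtypeEquivSubtype fun h => (leaves_eq_of_equiv h).trans t.2),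
    Nat.card_congr (Equiv.subtypeEquivRight fun _ => equiv_iff_mem_flips), Nat.card_eq_finsetCard,
    card_flips (by rw [t.2]; exact hs), t.2]

end BT

/-- The number of binary tree topologies with `n ≥ 1` distinguishable (labelled) leaves
is the double factorial `(2n-3)!!` (with `(2·1-3)!! = 1` for `n = 1`). -/
theorem card_binaryTreeTopologies (n : ℕ) (hn : 1 ≤ n) :
    Nat.card (Quotient (labTreeSetoid n)) = Nat.doubleFactorial (2 * n - 3) := by
  obtain ⟨m, rfl⟩ : ∃ m, n = m + 1 := ⟨n - 1, by omega⟩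
  have hnd : (Finset.univ : Finset (Fin (m + 1))).1.Nodup := Finset.univ.nodup
  have hcard : Multiset.card (Finset.univ : Finset (Fin (m + 1))).1 = m + 1 := by simp
  have htrees := BT.card_subtype_leaves_eq hnd hcard
  have : Finite {t : BT (Fin (m + 1)) // t.leaves = (Finset.univ : Finset (Fin (m + 1))).1} :=
    Nat.finite_of_card_ne_zero (by rw [htrees]; positivity)
  have hclass (c : Quotient (labTreeSetoid (m + 1))) : Nat.card {t // ⟦t⟧ = c} = 2 ^ m := by
    induction c using Quotient.inductionOn with
    | h t =>
      rw [Nat.card_congr (Equiv.subtypeEquivRight fun _ => Quotient.eq)]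
      exact (BT.card_equiv_class hnd t).trans (by rw [hcard, Nat.add_sub_cancel])
  have hsplit := Nat.card_eq_card_mul_of_card_fiber _ (pow_ne_zero m two_ne_zero) hclass
  rw [htrees, mul_comm] at hsplit
  rw [show 2 * (m + 1) - 3 = 2 * m - 1 by omega]
  exact (Nat.eq_of_mul_eq_mul_right (by positivity) hsplit).symm
end

section
/- All binary decomposition trees representing the same vertex-series-parallel partial order v on n actors have the same number of S-nodes; consequently the prior π(t|q) = (1/(2n-3)!!)(q/2)^{S(t)}(1-q)^{n-1-S(t)} is constant on the set t(v) of BDTs representing v, and the induced prior on VSPs satisfies π(v|q) = |t(v)| · π(t|q) for any t ∈ t(v). -/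
/-- Binary decomposition trees (BDTs): ordered binary trees with leaves labelled by
`α` and internal nodes typed `S` (`true`) or `P` (`false`); at an `S` node the left
child is the 'upper child' (stacking order), while at a `P` node the order of children
carries no information. -/
inductive BDT (α : Type) : Type
  | leaf : α → BDT α
  | node : Bool → BDT α → BDT α → BDT α

namespace BDT

/-- Multiset of leaf labels. -/
def leaves {α : Type} : BDT α → Multiset α
  | .leaf a => {a}
  | .node _ l r => l.leaves + r.leaves

/-- Number of `S`-typed internal nodes. -/
def sCount {α : Type} : BDT α → ℕ
  | .leaf _ => 0
  | .node s l r => (if s then 1 else 0) + l.sCount + r.sCount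

/-- The VSP partial order represented by a BDT, as the strict relation `a ≻ b`:
an `S` node puts everything in its upper (left) subtree above everything in its lower
(right) subtree; a `P` node adds no relations. -/
def eval {α : Type} : BDT α → α → α → Prop
  | .leaf _ => fun _ _ => False
  | .node s l r => fun a b =>
      l.eval a b ∨ r.eval a b ∨ (s = true ∧ a ∈ l.leaves ∧ b ∈ r.leaves)

/-- Smallest leaf label. -/
def minLeaf {α : Type} [LinearOrder α] : BDT α → α
  | .leaf a => a
  | .node _ l r => min l.minLeaf r.minLeaf

/-- Canonical orientation at `P` nodes (children ordered by smallest leaf label), so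
that canonical trees are in bijection with BDTs regarded with unordered children at
`P` nodes. -/
def pcanon {α : Type} [LinearOrder α] : BDT α → Prop
  | .leaf _ => True
  | .node s l r => l.pcanon ∧ r.pcanon ∧ (s = false → l.minLeaf < r.minLeaf)

end BDT

/-- The BDT prior `π(t|q) = (1/(2n-3)!!) (q/2)^{S(t)} (1-q)^{n-1-S(t)}` as a function
of the number `s = S(t)` of `S`-nodes. -/
noncomputable def treePrior (n : ℕ) (q : ℝ) (s : ℕ) : ℝ :=
  (1 / (Nat.doubleFactorial (2 * n - 3) : ℝ)) * (q / 2) ^ s * (1 - q) ^ (n - 1 - s)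

namespace BDT

variable {α : Type}

lemma mem_of_eval_left : ∀ {t : BDT α} {a b : α}, t.eval a b → a ∈ t.leaves
  | .leaf _, a, b, h => h.elim
  | .node s l r, a, b, h => by
    simp only [eval] at h
    rcases h with h | h | ⟨_, ha, _⟩
    · exact Multiset.mem_add.2 (Or.inl (mem_of_eval_left h))
    · exact Multiset.mem_add.2 (Or.inr (mem_of_eval_left h))
    · exact Multiset.mem_add.2 (Or.inl ha)

lemma mem_of_eval_right : ∀ {t : BDT α} {a b : α}, t.eval a b → b ∈ t.leaves
  | .leaf _, a, b, h => h.elim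
  | .node s l r, a, b, h => by
    simp only [eval] at h
    rcases h with h | h | ⟨_, _, hb⟩
    · exact Multiset.mem_add.2 (Or.inl (mem_of_eval_right h))
    · exact Multiset.mem_add.2 (Or.inr (mem_of_eval_right h))
    · exact Multiset.mem_add.2 (Or.inr hb)

lemma eval_irrefl : ∀ (t : BDT α), t.leaves.Nodup → ∀ a, ¬ t.eval a a
  | .leaf _, _, a, h => h.elim
  | .node s l r, hn, a, h => by
    simp only [leaves, Multiset.nodup_add] at hn
    obtain ⟨hl, hr, hd⟩ := hn
    simp only [eval] at h
    rcases h with h | h | ⟨_, h1, h2⟩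
    · exact eval_irrefl l hl a h
    · exact eval_irrefl r hr a h
    · exact Multiset.disjoint_left.1 hd h1 h2

lemma exists_min : ∀ (t : BDT α), t.leaves.Nodup → ∃ a ∈ t.leaves, ∀ b, ¬ t.eval a b
  | .leaf x, _ => ⟨x, by simp [leaves], fun b h => h.elim⟩
  | .node s l r, hn => by
    simp only [leaves, Multiset.nodup_add] at hn
    obtain ⟨hl, hr, hd⟩ := hn
    obtain ⟨a, ha, hmin⟩ := exists_min r hr
    refine ⟨a, Multiset.mem_add.2 (Or.inr ha), fun b h => ?_⟩
    simp only [eval] at h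
    rcases h with h | h | ⟨_, h1, _⟩
    · exact Multiset.disjoint_left.1 hd (mem_of_eval_left h) ha
    · exact hmin b h
    · exact Multiset.disjoint_left.1 hd h1 ha

/-- The downset of `a` in the order represented by `t`. -/
def dset (t : BDT α) (a : α) : Set α := {b | t.eval a b}

open Classical in
/-- The finset of distinct downsets of leaves of `t`. -/
noncomputable def dsets (t : BDT α) : Finset (Set α) :=
  t.leaves.toFinset.image t.dset

open Classical in
lemma card_dsets : ∀ (t : BDT α), t.leaves.Nodup → (dsets t).card = t.sCount + 1
  | .leaf x, _ => by
    simp [dsets, leaves, sCount]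
  | .node s l r, hn => by
    have hn' := hn
    simp only [leaves, Multiset.nodup_add] at hn'
    obtain ⟨hl, hr, hd⟩ := hn'
    have hdisj : ∀ {a : α}, a ∈ l.leaves → a ∉ r.leaves := fun h => Multiset.disjoint_left.1 hd h
    -- downsets of elements of r are unchanged
    have hdr : ∀ a ∈ r.leaves, (BDT.node s l r).dset a = r.dset a := by
      intro a ha
      ext b
      simp only [dset, eval, Set.mem_setOf_eq]
      constructor
      · rintro (h | h | ⟨_, h1, _⟩)
        · exact absurd (mem_of_eval_left h) (fun hm => hdisj hm ha)
        · exact h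
        · exact absurd h1 (fun hm => hdisj hm ha)
      · exact fun h => Or.inr (Or.inl h)
    have toF : (BDT.node s l r).leaves.toFinset = l.leaves.toFinset ∪ r.leaves.toFinset := by
      simp [leaves, Multiset.toFinset_add]
    cases s with
    | false =>
      have hdl : ∀ a ∈ l.leaves, (BDT.node false l r).dset a = l.dset a := by
        intro a ha
        ext b
        simp only [dset, eval, Set.mem_setOf_eq]
        constructor
        · rintro (h | h | ⟨hf, _, _⟩)
          · exact h
          · exact absurd (mem_of_eval_left h) (fun hm => hdisj ha hm)
          · exact absurd hf (by simp)
        · exact fun h => Or.inl h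
      have himg : dsets (BDT.node false l r) = dsets l ∪ dsets r := by
        unfold dsets
        rw [toF, Finset.image_union]
        congr 1
        · exact Finset.image_congr (fun a ha => hdl a (Multiset.mem_toFinset.1 ha))
        · exact Finset.image_congr (fun a ha => hdr a (Multiset.mem_toFinset.1 ha))
      have hinter : dsets l ∩ dsets r = {(∅ : Set α)} := by
        apply Finset.ext
        intro X
        simp only [Finset.mem_inter, Finset.mem_singleton]
        constructor
        · rintro ⟨h1, h2⟩
          simp only [dsets, Finset.mem_image, Multiset.mem_toFinset] at h1 h2
          obtain ⟨a, ha, rfl⟩ := h1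
          obtain ⟨a', ha', he⟩ := h2
          ext b
          simp only [Set.mem_empty_iff_false, iff_false]
          intro hb
          have hb' : b ∈ r.dset a' := by rw [he]; exact hb
          exact hdisj (mem_of_eval_right hb) (mem_of_eval_right hb')
        · rintro rfl
          constructor
          · obtain ⟨a, ha, hmin⟩ := exists_min l hl
            simp only [dsets, Finset.mem_image, Multiset.mem_toFinset]
            exact ⟨a, ha, by ext b; simpa [dset] using hmin b⟩
          · obtain ⟨a, ha, hmin⟩ := exists_min r hr
            simp only [dsets, Finset.mem_image, Multiset.mem_toFinset]
            exact ⟨a, ha, by ext b; simpa [dset] using hmin b⟩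
      have hcard := Finset.card_union_add_card_inter (dsets l) (dsets r)
      rw [hinter, Finset.card_singleton] at hcard
      have := card_dsets l hl
      have := card_dsets r hr
      rw [himg]
      simp only [sCount, if_neg (by simp : ¬(false = true))]
      omega
    | true =>
      set R : Set α := {b | b ∈ r.leaves} with hR
      have hRne : R.Nonempty := by
        obtain ⟨a, ha, _⟩ := exists_min r hr
        exact ⟨a, ha⟩
      have hdl : ∀ a ∈ l.leaves, (BDT.node true l r).dset a = l.dset a ∪ R := by
        intro a ha
        ext b
        simp only [dset, eval, Set.mem_setOf_eq, Set.mem_union, hR]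
        constructor
        · rintro (h | h | ⟨_, _, h2⟩)
          · exact Or.inl h
          · exact absurd (mem_of_eval_left h) (fun hm => hdisj ha hm)
          · exact Or.inr h2
        · rintro (h | h)
          · exact Or.inl h
          · exact Or.inr (Or.inr ⟨by simp, ha, h⟩)
      have himg : dsets (BDT.node true l r)
          = (dsets l).image (fun X => X ∪ R) ∪ dsets r := by
        unfold dsets
        rw [toF, Finset.image_union]
        congr 1
        · rw [Finset.image_image]
          exact Finset.image_congr (fun a ha => hdl a (Multiset.mem_toFinset.1 ha))
        · exact Finset.image_congr (fun a ha => hdr a (Multiset.mem_toFinset.1 ha))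
      -- any member of dsets r misses one of its own elements and is a subset of R
      have hsubR : ∀ X ∈ dsets r, X ⊆ R ∧ X ≠ R := by
        intro X hX
        simp only [dsets, Finset.mem_image, Multiset.mem_toFinset] at hX
        obtain ⟨a, ha, rfl⟩ := hX
        constructor
        · intro b hb; exact mem_of_eval_right hb
        · intro hEq
          have : a ∈ r.dset a := by rw [hEq]; exact ha
          exact eval_irrefl r hr a this
      have hsubL : ∀ X ∈ dsets l, X ∩ R = ∅ := by
        intro X hX
        simp only [dsets, Finset.mem_image, Multiset.mem_toFinset] at hX
        obtain ⟨a, ha, rfl⟩ := hX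
        ext b
        simp only [Set.mem_inter_iff, Set.mem_empty_iff_false, iff_false, not_and]
        intro hb hbR
        exact hdisj (mem_of_eval_right hb) hbR
      have hinj : Set.InjOn (fun X => X ∪ R) (dsets l : Set (Set α)) := by
        intro X hX Y hY hEq
        have hEq' : X ∪ R = Y ∪ R := hEq
        have hX' := hsubL X (Finset.mem_coe.1 hX)
        have hY' := hsubL Y (Finset.mem_coe.1 hY)
        ext b
        constructor
        · intro hb
          have hb' : b ∈ Y ∪ R := hEq' ▸ Set.mem_union_left R hb
          rcases hb' with h | h
          · exact h
          · have hm : b ∈ X ∩ R := ⟨hb, h⟩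
            rw [hX'] at hm
            exact hm.elim
        · intro hb
          have hb' : b ∈ X ∪ R := hEq'.symm ▸ Set.mem_union_left R hb
          rcases hb' with h | h
          · exact h
          · have hm : b ∈ Y ∩ R := ⟨hb, h⟩
            rw [hY'] at hm
            exact hm.elim
      have hdisj2 : Disjoint ((dsets l).image (fun X => X ∪ R)) (dsets r) := by
        rw [Finset.disjoint_left]
        intro Z hZ1 hZ2
        simp only [Finset.mem_image] at hZ1
        obtain ⟨X, hX, rfl⟩ := hZ1
        obtain ⟨hsub, hne⟩ := hsubR _ hZ2
        have hXR := hsubL X hX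
        apply hne
        apply Set.Subset.antisymm hsub
        intro b hb
        exact Set.mem_union_right _ hb
      rw [himg, Finset.card_union_of_disjoint hdisj2, Finset.card_image_of_injOn hinj]
      have := card_dsets l hl
      have := card_dsets r hr
      have hs : (BDT.node true l r).sCount = 1 + l.sCount + r.sCount := by
        simp [sCount]
      omega

lemma sCount_eq_of_eval_eq {t t' : BDT α} (hlt : t.leaves = t'.leaves)
    (hnd : t.leaves.Nodup) (he : t.eval = t'.eval) : t.sCount = t'.sCount := by
  classical
  have h1 := card_dsets t hnd
  have h2 := card_dsets t' (hlt ▸ hnd)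
  have : dsets t = dsets t' := by
    unfold dsets
    rw [hlt]
    exact Finset.image_congr (fun a _ => by unfold dset; rw [he])
  rw [this] at h1
  omega

end BDT


/-- All BDTs representing the same VSP `v` on `n` actors have the same number of
`S`-nodes; consequently the prior `π(t|q)` is constant on the set `t(v)` of BDTs
representing `v`, and the induced prior on VSPs satisfies
`π(v|q) = |t(v)| · π(t|q)` for any `t ∈ t(v)`. -/

theorem bdt_prior_constant_on_fibres (n : ℕ) (hn : 1 ≤ n) (q : ℝ) :
    (∀ t t' : BDT (Fin n),
        t.leaves = (Finset.univ : Finset (Fin n)).1 →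
        t'.leaves = (Finset.univ : Finset (Fin n)).1 →
        t.eval = t'.eval → t.sCount = t'.sCount) ∧
    (∀ (r : Fin n → Fin n → Prop) (t0 : BDT (Fin n)),
        t0.pcanon → t0.leaves = (Finset.univ : Finset (Fin n)).1 → t0.eval = r →
        (∑ᶠ t : {t : BDT (Fin n) //
              t.pcanon ∧ t.leaves = (Finset.univ : Finset (Fin n)).1 ∧ t.eval = r},
            treePrior n q t.1.sCount)
          = (Nat.card {t : BDT (Fin n) //
              t.pcanon ∧ t.leaves = (Finset.univ : Finset (Fin n)).1 ∧ t.eval = r} : ℝ)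
              * treePrior n q t0.sCount) := by
  have key : ∀ t t' : BDT (Fin n),
      t.leaves = (Finset.univ : Finset (Fin n)).1 →
      t'.leaves = (Finset.univ : Finset (Fin n)).1 →
      t.eval = t'.eval → t.sCount = t'.sCount := by
    intro t t' h1 h2 he
    exact BDT.sCount_eq_of_eval_eq (h1.trans h2.symm) (h1 ▸ Finset.univ.nodup) he
  refine ⟨key, ?_⟩
  intro r t0 _ hL hE
  set T := {t : BDT (Fin n) //
      t.pcanon ∧ t.leaves = (Finset.univ : Finset (Fin n)).1 ∧ t.eval = r}
  have hconst : ∀ t : T, treePrior n q t.1.sCount = treePrior n q t0.sCount := by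
    rintro ⟨t, _, hL', hE'⟩
    congr 1
    exact key t t0 hL' hL (hE'.trans hE.symm)
  rw [finsum_congr hconst]
  rcases finite_or_infinite T with hfin | hinf
  · have := Fintype.ofFinite T
    rw [finsum_eq_sum_of_fintype, Finset.sum_const, Nat.card_eq_fintype_card,
      Finset.card_univ, nsmul_eq_mul]
  · rw [Nat.card_eq_zero_of_infinite]
    push_cast
    rw [zero_mul]
    by_cases hc : treePrior n q t0.sCount = 0
    · rw [hc]; exact finsum_zero
    · apply finsum_of_infinite_support
      rw [Function.support_const hc]
      exact Set.infinite_univ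
end

section
/- If h is a vertex-series-parallel partial order and o is a subset of its ground set, then the restricted partial order h[o] is again vertex-series-parallel. -/
/-- Vertex-series-parallel partial orders, given as a ground set together with the
strict relation `≻` of the order (`r a b` means `a ≻ b`): any singleton is a VSP, and
series (`⊗`, all of `s` above all of `t`) and parallel (`⊕`, no cross relations)
compositions of VSPs on disjoint ground sets are VSPs. -/
inductive IsVSP {α : Type*} [DecidableEq α] : Finset α → (α → α → Prop) → Prop
  | single (a : α) : IsVSP {a} fun _ _ => False
  | series {s t : Finset α} {r1 r2 : α → α → Prop} :
      Disjoint s t → IsVSP s r1 → IsVSP t r2 →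
      IsVSP (s ∪ t) fun a b => r1 a b ∨ r2 a b ∨ (a ∈ s ∧ b ∈ t)
  | parallel {s t : Finset α} {r1 r2 : α → α → Prop} :
      Disjoint s t → IsVSP s r1 → IsVSP t r2 →
      IsVSP (s ∪ t) fun a b => r1 a b ∨ r2 a b

theorem IsVSP.supp {α : Type*} [DecidableEq α] {s : Finset α} {r : α → α → Prop}
    (h : IsVSP s r) : ∀ a b, r a b → a ∈ s ∧ b ∈ s := by
  induction h with
  | single a => intro a b hab; exact hab.elim
  | series hd h1 h2 ih1 ih2 =>
    intro a b hab
    rcases hab with hab | hab | hab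
    · exact ⟨Finset.mem_union_left _ (ih1 a b hab).1, Finset.mem_union_left _ (ih1 a b hab).2⟩
    · exact ⟨Finset.mem_union_right _ (ih2 a b hab).1, Finset.mem_union_right _ (ih2 a b hab).2⟩
    · exact ⟨Finset.mem_union_left _ hab.1, Finset.mem_union_right _ hab.2⟩
  | parallel hd h1 h2 ih1 ih2 =>
    intro a b hab
    rcases hab with hab | hab
    · exact ⟨Finset.mem_union_left _ (ih1 a b hab).1, Finset.mem_union_left _ (ih1 a b hab).2⟩
    · exact ⟨Finset.mem_union_right _ (ih2 a b hab).1, Finset.mem_union_right _ (ih2 a b hab).2⟩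

/-- The restriction `h[o]` of a vertex-series-parallel partial order `h` to a (nonempty)
subset `o` of its ground set is again vertex-series-parallel. -/
theorem IsVSP.restrict {α : Type*} [DecidableEq α] {s : Finset α} {r : α → α → Prop}
    (h : IsVSP s r) (o : Finset α) (ho : o ⊆ s) (hne : o.Nonempty) :
    IsVSP o fun a b => a ∈ o ∧ b ∈ o ∧ r a b := by
  induction h generalizing o with
  | single a =>
    have : o = {a} := by
      rcases Finset.subset_singleton_iff.mp ho with h | h
      · exact absurd h (Finset.nonempty_iff_ne_empty.mp hne)
      · exact h
    subst this
    convert IsVSP.single a using 2 with x y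
    ext y
    simp
  | @series s t r1 r2 hd h1 h2 ih1 ih2 =>
    have hsplit : o ∩ s ∪ o ∩ t = o := by
      rw [← Finset.inter_union_distrib_left]
      exact Finset.inter_eq_left.mpr ho
    rcases (o ∩ s).eq_empty_or_nonempty with h1e | h1ne
    · -- o ⊆ t
      have hot : o ⊆ t := fun x hx => by
        rcases Finset.mem_union.mp (ho hx) with h | h
        · exact absurd (Finset.mem_inter.mpr ⟨hx, h⟩) (by rw [h1e]; simp)
        · exact h
      have := ih2 o hot hne
      convert this using 2 with a b
      ext b
      constructor
      · rintro ⟨ha, hb, hr⟩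
        refine ⟨ha, hb, ?_⟩
        rcases hr with hr | hr | hr
        · exact absurd (h1.supp a b hr).1 (Finset.disjoint_right.mp hd (hot ha))
        · exact hr
        · exact absurd hr.1 (Finset.disjoint_right.mp hd (hot ha))
      · rintro ⟨ha, hb, hr⟩
        exact ⟨ha, hb, Or.inr (Or.inl hr)⟩
    rcases (o ∩ t).eq_empty_or_nonempty with h2e | h2ne
    · -- o ⊆ s
      have hos : o ⊆ s := fun x hx => by
        rcases Finset.mem_union.mp (ho hx) with h | h
        · exact h
        · exact absurd (Finset.mem_inter.mpr ⟨hx, h⟩) (by rw [h2e]; simp)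
      have := ih1 o hos hne
      convert this using 2 with a b
      ext b
      constructor
      · rintro ⟨ha, hb, hr⟩
        refine ⟨ha, hb, ?_⟩
        rcases hr with hr | hr | hr
        · exact hr
        · exact absurd (h2.supp a b hr).2 (Finset.disjoint_left.mp hd (hos hb))
        · exact absurd hr.2 (Finset.disjoint_left.mp hd (hos hb))
      · rintro ⟨ha, hb, hr⟩
        exact ⟨ha, hb, Or.inl hr⟩
    · -- both parts nonempty
      have key := IsVSP.series
        (Finset.disjoint_of_subset_left Finset.inter_subset_right
          (Finset.disjoint_of_subset_right Finset.inter_subset_right hd))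
        (ih1 (o ∩ s) Finset.inter_subset_right h1ne)
        (ih2 (o ∩ t) Finset.inter_subset_right h2ne)
      rw [hsplit] at key
      convert key using 2 with a b
      ext b
      simp only [Finset.mem_inter]
      constructor
      · rintro ⟨ha, hb, hr⟩
        rcases hr with hr | hr | hr
        · exact Or.inl ⟨⟨ha, (h1.supp a b hr).1⟩, ⟨hb, (h1.supp a b hr).2⟩, hr⟩
        · exact Or.inr (Or.inl ⟨⟨ha, (h2.supp a b hr).1⟩, ⟨hb, (h2.supp a b hr).2⟩, hr⟩)
        · exact Or.inr (Or.inr ⟨⟨ha, hr.1⟩, ⟨hb, hr.2⟩⟩)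
      · rintro (⟨⟨ha, _⟩, ⟨hb, _⟩, hr⟩ | ⟨⟨ha, _⟩, ⟨hb, _⟩, hr⟩ | ⟨⟨ha, has⟩, ⟨hb, hbt⟩⟩)
        · exact ⟨ha, hb, Or.inl hr⟩
        · exact ⟨ha, hb, Or.inr (Or.inl hr)⟩
        · exact ⟨ha, hb, Or.inr (Or.inr ⟨has, hbt⟩)⟩
  | @parallel s t r1 r2 hd h1 h2 ih1 ih2 =>
    have hsplit : o ∩ s ∪ o ∩ t = o := by
      rw [← Finset.inter_union_distrib_left]
      exact Finset.inter_eq_left.mpr ho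
    rcases (o ∩ s).eq_empty_or_nonempty with h1e | h1ne
    · have hot : o ⊆ t := by
        rw [← hsplit, h1e, Finset.empty_union]; exact Finset.inter_subset_right
      have := ih2 o hot hne
      convert this using 2 with a b
      ext b
      constructor
      · rintro ⟨ha, hb, hr⟩
        refine ⟨ha, hb, ?_⟩
        rcases hr with hr | hr
        · exact absurd (h1.supp a b hr).1 (Finset.disjoint_right.mp hd (hot ha))
        · exact hr
      · rintro ⟨ha, hb, hr⟩
        exact ⟨ha, hb, Or.inr hr⟩
    rcases (o ∩ t).eq_empty_or_nonempty with h2e | h2ne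
    · have hos : o ⊆ s := fun x hx => by
        rcases Finset.mem_union.mp (ho hx) with h | h
        · exact h
        · exact absurd (Finset.mem_inter.mpr ⟨hx, h⟩) (by rw [h2e]; simp)
      have := ih1 o hos hne
      convert this using 2 with a b
      ext b
      constructor
      · rintro ⟨ha, hb, hr⟩
        refine ⟨ha, hb, ?_⟩
        rcases hr with hr | hr
        · exact hr
        · exact absurd (h2.supp a b hr).1 (Finset.disjoint_left.mp hd (hos ha))
      · rintro ⟨ha, hb, hr⟩
        exact ⟨ha, hb, Or.inl hr⟩
    · have key := IsVSP.parallel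
        (Finset.disjoint_of_subset_left Finset.inter_subset_right
          (Finset.disjoint_of_subset_right Finset.inter_subset_right hd))
        (ih1 (o ∩ s) Finset.inter_subset_right h1ne)
        (ih2 (o ∩ t) Finset.inter_subset_right h2ne)
      rw [hsplit] at key
      convert key using 2 with a b
      ext b
      simp only [Finset.mem_inter]
      constructor
      · rintro ⟨ha, hb, hr⟩
        rcases hr with hr | hr
        · exact Or.inl ⟨⟨ha, (h1.supp a b hr).1⟩, ⟨hb, (h1.supp a b hr).2⟩, hr⟩
        · exact Or.inr ⟨⟨ha, (h2.supp a b hr).1⟩, ⟨hb, (h2.supp a b hr).2⟩, hr⟩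
      · rintro (⟨⟨ha, _⟩, ⟨hb, _⟩, hr⟩ | ⟨⟨ha, _⟩, ⟨hb, _⟩, hr⟩)
        · exact ⟨ha, hb, Or.inl hr⟩
        · exact ⟨ha, hb, Or.inr hr⟩
end

section
/- A finite partial order h is vertex-series-parallel if and only if it contains no four elements a, b, c, d with relations a ≻ c, a ≻ d, b ≻ d, and no other relations among {a,b,c,d} (i.e., a‖b, b‖c, c‖d in h): the induced suborder isomorphic to the 'N-shaped' forbidden subgraph. -/
/-!
An `N` is connected both in its comparability graph and in its incomparability graph, while a
parallel composition disconnects the former and a series composition the latter; hence VSP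
orders are `N`-free. Conversely, the comparability graph of an `N`-free order is `P₄`-free (an
induced `P₄` of comparabilities is oriented as an `N` by transitivity), so by Seinsche's theorem
either it or its complement is disconnected. In the first case the order is a parallel
composition of its restrictions to the two sides; in the second, the elements lying above
everything on the other side of the split form an upper part over the rest, and the order is a
series composition.
-/

open Finset

namespace Cograph

variable {α : Type*} {g : α → α → Prop}

def compl (g : α → α → Prop) (x y : α) : Prop := x ≠ y ∧ ¬ g x y

instance [Std.Symm g] : Std.Symm (compl g) where
  symm _ _ h := ⟨h.1.symm, fun h' => h.2 (symm h')⟩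

def HasP4 (s : Finset α) (g : α → α → Prop) : Prop :=
  ∃ a ∈ s, ∃ b ∈ s, ∃ c ∈ s, ∃ d ∈ s, g a b ∧ g b c ∧ g c d ∧ ¬ g a c ∧ ¬ g a d ∧ ¬ g b d

theorem HasP4.mono {s t : Finset α} (hst : s ⊆ t) : HasP4 s g → HasP4 t g :=
  fun ⟨a, ha, b, hb, c, hc, d, hd, h⟩ => ⟨a, hst ha, b, hst hb, c, hst hc, d, hst hd, h⟩

/-- The complement of the path `a - b - c - d` is the path `c - a - d - b`. -/
theorem HasP4.of_compl [Std.Symm g] {s : Finset α} : HasP4 s (compl g) → HasP4 s g := by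
  rintro ⟨a, ha, b, hb, c, hc, d, hd, hab, hbc, hcd, hac, had, hbd⟩
  have of_not_compl {x y : α} (hxy : x ≠ y) (h : ¬ compl g x y) : g x y :=
    not_not.1 fun h' => h ⟨hxy, h'⟩
  have gac := of_not_compl (by rintro rfl; exact had hcd) hac
  have gad := of_not_compl (by rintro rfl; exact hac (symm hcd)) had
  have gbd := of_not_compl (by rintro rfl; exact had hab) hbd
  exact ⟨c, hc, a, ha, d, hd, b, hb, symm gac, gad, symm gbd, hcd.2, fun h => hbc.2 (symm h),
    hab.2⟩

variable [DecidableEq α]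

/-- `g` is disconnected on `s`, with `A` a union of components. -/
def IsSplit (g : α → α → Prop) (s A : Finset α) : Prop :=
  A ⊆ s ∧ A.Nonempty ∧ (s \ A).Nonempty ∧ ∀ a ∈ A, ∀ b ∈ s \ A, ¬ g a b

theorem IsSplit.sdiff [Std.Symm g] {s A : Finset α} (h : IsSplit g s A) :
    IsSplit g s (s \ A) := by
  obtain ⟨hAs, hA, hsA, hcut⟩ := h
  rw [IsSplit, Finset.sdiff_sdiff_eq_self hAs]
  exact ⟨sdiff_subset, hsA, hA, fun b hb a ha hba => hcut a ha b hb (symm hba)⟩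

theorem isSplit_singleton {s : Finset α} {v : α} (hv : v ∈ s) (hs : s.Nontrivial)
    (h : ∀ x ∈ s.erase v, ¬ g v x) : IsSplit g s {v} := by
  obtain ⟨x, hx, hxv⟩ := hs.exists_ne v
  refine ⟨singleton_subset_iff.2 hv, singleton_nonempty v, ⟨x, by simp [hx, hxv]⟩, ?_⟩
  simp only [mem_singleton, forall_eq, sdiff_singleton_eq_erase]
  exact h

theorem IsSplit.of_erase {s A : Finset α} {v : α} (h : IsSplit g (s.erase v) A) (hv : v ∈ s)
    (hvA : ∀ a ∈ A, ¬ g a v) : IsSplit g s A := by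
  obtain ⟨hAs, hA, -, hcut⟩ := h
  refine ⟨hAs.trans (erase_subset v s), hA, ⟨v, mem_sdiff.2 ⟨hv, fun h => ?_⟩⟩,
    fun a ha b hb => ?_⟩
  · exact (ne_of_mem_erase (hAs h)) rfl
  · rcases eq_or_ne b v with rfl | hbv
    · exact hvA a ha
    · exact hcut a ha b (by simp_all)

/-- Shrink `A` to the non-neighbours of `v` in it: an edge `a - b` from them to a neighbour `b`
of `v` in `A` would give the path `a - b - v - z`, so the shrunken set is again such a split. A minimal
one contains no neighbour of `v`, so it also splits `s`. -/
theorem exists_isSplit_of_isSplit_erase_of_mem [Std.Symm g] {s A : Finset α} {v x z : α}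
    (hP4 : ¬ HasP4 s g) (hv : v ∈ s) (hA : IsSplit g (s.erase v) A) (hx : x ∈ A)
    (hvx : ¬ g v x) (hz : z ∈ s.erase v \ A) (hvz : g v z) : ∃ C, IsSplit g s C := by
  induction A using Finset.strongInduction generalizing x with
  | H A ih =>
  by_cases hadj : ∃ y ∈ A, g v y
  swap
  · exact ⟨A, hA.of_erase hv fun a ha hav => hadj ⟨a, ha, symm hav⟩⟩
  obtain ⟨y, hyA, hvy⟩ := hadj
  classical
  set N := A.filter fun a => ¬ g v a
  have hAs : A ⊆ s := hA.1.trans (erase_subset v s)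
  have hzs : z ∈ s := erase_subset v s (mem_sdiff.1 hz).1
  by_cases hedge : ∃ a ∈ N, ∃ b ∈ A \ N, g a b
  · obtain ⟨a, haN, b, hbN, hab⟩ := hedge
    obtain ⟨haA, hva⟩ := mem_filter.1 haN
    have hvb : g v b := by simpa [N, (mem_sdiff.1 hbN).1] using (mem_sdiff.1 hbN).2
    exact absurd ⟨a, hAs haA, b, hAs (mem_sdiff.1 hbN).1, v, hv, z, hzs, hab, symm hvb, hvz,
      fun h => hva (symm h), hA.2.2.2 a haA z hz, hA.2.2.2 b (mem_sdiff.1 hbN).1 z hz⟩ hP4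
  · have hNA : N ⊂ A := filter_ssubset.2 ⟨y, hyA, not_not.2 hvy⟩
    have hxN : x ∈ N := mem_filter.2 ⟨hx, hvx⟩
    have hzN : z ∈ s.erase v \ N :=
      mem_sdiff.2 ⟨(mem_sdiff.1 hz).1, fun h => (mem_sdiff.1 hz).2 (hNA.subset h)⟩
    refine ih N hNA ⟨hNA.subset.trans hA.1, ⟨x, hxN⟩, ⟨z, hzN⟩, fun a ha b hb hab => ?_⟩
      hxN hvx hzN
    obtain ⟨hbs, hbN⟩ := mem_sdiff.1 hb
    by_cases hbA : b ∈ A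
    · exact hedge ⟨a, ha, b, mem_sdiff.2 ⟨hbA, hbN⟩, hab⟩
    · exact hA.2.2.2 a (hNA.subset ha) b (mem_sdiff.2 ⟨hbs, hbA⟩) hab

theorem exists_isSplit_of_isSplit_erase [Std.Symm g] {s A : Finset α} {v x : α}
    (hP4 : ¬ HasP4 s g) (hv : v ∈ s) (hA : IsSplit g (s.erase v) A) (hx : x ∈ s.erase v)
    (hvx : ¬ g v x) : ∃ C, IsSplit g s C := by
  by_cases hout : ∃ z ∈ s.erase v \ A, g v z
  swap
  · exact ⟨_, hA.sdiff.of_erase hv fun b hb hbv => hout ⟨b, hb, symm hbv⟩⟩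
  by_cases hin : ∃ z ∈ A, g v z
  swap
  · exact ⟨A, hA.of_erase hv fun a ha hav => hin ⟨a, ha, symm hav⟩⟩
  obtain ⟨z, hz, hvz⟩ := hout
  obtain ⟨z', hz', hvz'⟩ := hin
  by_cases hxA : x ∈ A
  · exact exists_isSplit_of_isSplit_erase_of_mem hP4 hv hA hxA hvx hz hvz
  · refine exists_isSplit_of_isSplit_erase_of_mem hP4 hv hA.sdiff (mem_sdiff.2 ⟨hx, hxA⟩) hvx
      ?_ hvz'
    rwa [Finset.sdiff_sdiff_eq_self hA.1]

/-- Seinsche: a `P₄`-free graph on at least two vertices is disconnected or has a disconnected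
complement. -/
theorem exists_isSplit_or_isSplit_compl [Std.Symm g] {s : Finset α} (hP4 : ¬ HasP4 s g)
    (hs : s.Nontrivial) :
    ∃ A, IsSplit g s A ∨ IsSplit (compl g) s A := by
  induction s using Finset.strongInduction with
  | H s ih =>
  obtain ⟨v, hv⟩ := hs.nonempty
  by_cases hall : ∀ x ∈ s.erase v, g v x
  · exact ⟨{v}, Or.inr (isSplit_singleton hv hs fun x hx h => h.2 (hall x hx))⟩
  by_cases hnone : ∀ x ∈ s.erase v, ¬ g v x
  · exact ⟨{v}, Or.inl (isSplit_singleton hv hs hnone)⟩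
  push Not at hall hnone
  obtain ⟨x, hx, hvx⟩ := hall
  obtain ⟨z, hz, hvz⟩ := hnone
  have hs' : (s.erase v).Nontrivial := ⟨x, hx, z, hz, fun h => hvx (h ▸ hvz)⟩
  obtain ⟨A, hA | hA⟩ := ih _ (erase_ssubset hv) (fun h => hP4 (h.mono (erase_subset v s))) hs'
  · obtain ⟨C, hC⟩ := exists_isSplit_of_isSplit_erase hP4 hv hA hx hvx
    exact ⟨C, Or.inl hC⟩
  · obtain ⟨C, hC⟩ := exists_isSplit_of_isSplit_erase (fun h => hP4 h.of_compl) hv hA hz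
      fun h => h.2 hvz
    exact ⟨C, Or.inr hC⟩

end Cograph

open Cograph

section Poset

variable {α : Type*} {r r' : α → α → Prop} {s t : Finset α} {a b c d : α}

def IsN (r : α → α → Prop) (a b c d : α) : Prop :=
  r a c ∧ r a d ∧ r b d ∧ ¬ r a b ∧ ¬ r b a ∧ ¬ r b c ∧ ¬ r c b ∧ ¬ r c d ∧ ¬ r d c

def HasN (s : Finset α) (r : α → α → Prop) : Prop :=
  ∃ a b c d, a ∈ s ∧ b ∈ s ∧ c ∈ s ∧ d ∈ s ∧ IsN r a b c d

theorem HasN.of_isN (h : IsN r a b c d) (ha : a ∈ t) (hb : b ∈ t) (hc : c ∈ t) (hd : d ∈ t)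
    (hr : ∀ x ∈ t, ∀ y ∈ t, r x y ↔ r' x y) : HasN t r' := by
  refine ⟨a, b, c, d, ha, hb, hc, hd, ?_⟩
  rwa [IsN, ← hr a ha c hc, ← hr a ha d hd, ← hr b hb d hd, ← hr a ha b hb, ← hr b hb a ha,
    ← hr b hb c hc, ← hr c hc b hb, ← hr c hc d hd, ← hr d hd c hc]

theorem hasN_of_hasP4_symmGen [IsTrans α r] (h : HasP4 s (Relation.SymmGen r)) : HasN s r := by
  obtain ⟨a, ha, b, hb, c, hc, d, hd, hab, hbc, hcd, hac, had, hbd⟩ := h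
  simp only [Relation.SymmGen, not_or] at hab hbc hcd hac had hbd
  rcases hab with hab | hba
  · have hcb : r c b := hbc.resolve_left fun h => hac.1 (_root_.trans hab h)
    have hcd : r c d := hcd.resolve_right fun h => hbd.2 (_root_.trans h hcb)
    exact ⟨c, a, d, b, hc, ha, hd, hb, hcd, hcb, hab, hac.2, hac.1, had.1, had.2, hbd.2, hbd.1⟩
  · have hbc : r b c := hbc.resolve_right fun h => hac.2 (_root_.trans h hba)
    have hdc : r d c := hcd.resolve_left fun h => hbd.1 (_root_.trans hbc h)
    exact ⟨b, d, a, c, hb, hd, ha, hc, hba, hbc, hdc, hbd.1, hbd.2, had.2, had.1, hac.1, hac.2⟩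

theorem HasN.mono (hst : s ⊆ t) : HasN s r → HasN t r :=
  fun ⟨a, b, c, d, ha, hb, hc, hd, h⟩ => ⟨a, b, c, d, hst ha, hst hb, hst hc, hst hd, h⟩

def restrictTo (t : Finset α) (r : α → α → Prop) (a b : α) : Prop := a ∈ t ∧ b ∈ t ∧ r a b

instance [IsStrictOrder α r] : IsStrictOrder α (restrictTo t r) where
  irrefl a h := irrefl a h.2.2
  trans _ _ _ h h' := ⟨h.1, h'.2.1, _root_.trans h.2.2 h'.2.2⟩

theorem HasN.of_restrictTo (hts : t ⊆ s) (h : HasN t (restrictTo t r)) : HasN s r := by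
  obtain ⟨a, b, c, d, ha, hb, hc, hd, hN⟩ := h
  exact (HasN.of_isN hN ha hb hc hd fun x hx y hy => by simp [restrictTo, hx, hy]).mono hts

theorem IsN.hasN_or_hasN [DecidableEq α] {r₁ r₂ : α → α → Prop} (hN : IsN r a b c d)
    (ha : a ∈ s ∪ t) (hb : b ∈ s ∪ t) (hc : c ∈ s ∪ t) (hd : d ∈ s ∪ t)
    (hb' : a ∈ s ↔ b ∈ s) (hc' : a ∈ s ↔ c ∈ s) (hd' : a ∈ s ↔ d ∈ s)
    (hr₁ : ∀ x ∈ s, ∀ y ∈ s, r x y ↔ r₁ x y) (hr₂ : ∀ x ∈ t, ∀ y ∈ t, r x y ↔ r₂ x y) :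
    HasN s r₁ ∨ HasN t r₂ := by
  by_cases has : a ∈ s
  · exact .inl (.of_isN hN has (hb'.1 has) (hc'.1 has) (hd'.1 has) hr₁)
  · have ht {x : α} (hx : x ∈ s ∪ t) (hax : a ∈ s ↔ x ∈ s) : x ∈ t :=
      (mem_union.1 hx).resolve_left (hax.not.1 has)
    exact .inr (.of_isN hN (ht ha .rfl) (ht hb hb') (ht hc hc') (ht hd hd') hr₂)

variable [DecidableEq α]

theorem IsVSP.mem_of_rel (h : IsVSP s r) (hab : r a b) : a ∈ s ∧ b ∈ s := by
  induction h generalizing a b with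
  | single => exact hab.elim
  | series _ _ _ ih₁ ih₂ =>
    rcases hab with h | h | h
    exacts [(ih₁ h).imp (mem_union_left _) (mem_union_left _),
      (ih₂ h).imp (mem_union_right _) (mem_union_right _),
      h.imp (mem_union_left _) (mem_union_right _)]
  | parallel _ _ _ ih₁ ih₂ =>
    rcases hab with h | h
    exacts [(ih₁ h).imp (mem_union_left _) (mem_union_left _),
      (ih₂ h).imp (mem_union_right _) (mem_union_right _)]

theorem IsVSP.not_rel_of_not_mem (h : IsVSP s r) (ha : a ∉ s) : ¬ r a b :=
  fun hab => ha (h.mem_of_rel hab).1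

theorem IsVSP.not_hasN (h : IsVSP s r) : ¬ HasN s r := by
  induction h with
  | single => exact fun ⟨_, _, _, _, _, _, _, _, hac, _⟩ => hac
  | @series s t r₁ r₂ hst h₁ h₂ ih₁ ih₂ =>
    rintro ⟨a, b, c, d, ha, hb, hc, hd, hN⟩
    have hside : ∀ x ∈ s ∪ t, ∀ y ∈ s ∪ t, ¬ (r₁ x y ∨ r₂ x y ∨ (x ∈ s ∧ y ∈ t)) →
        ¬ (r₁ y x ∨ r₂ y x ∨ (y ∈ s ∧ x ∈ t)) → (x ∈ s ↔ y ∈ s) := by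
      intro x hx y hy hxy hyx
      have := @disjoint_left.1 hst x
      have := @disjoint_left.1 hst y
      rw [mem_union] at hx hy
      tauto
    obtain ⟨-, -, -, hab, hba, hbc, hcb, hcd, hdc⟩ := id hN
    have hb' := hside a ha b hb hab hba
    have hc' := hb'.trans (hside b hb c hc hbc hcb)
    refine (hN.hasN_or_hasN ha hb hc hd hb' hc' (hc'.trans (hside c hc d hd hcd hdc))
      (fun x hx y hy => ?_) (fun x hx y hy => ?_)).elim ih₁ ih₂
    · simp [h₂.not_rel_of_not_mem (disjoint_left.1 hst hx), disjoint_left.1 hst hy]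
    · simp [h₁.not_rel_of_not_mem (disjoint_right.1 hst hx), disjoint_right.1 hst hx]
  | @parallel s t r₁ r₂ hst h₁ h₂ ih₁ ih₂ =>
    rintro ⟨a, b, c, d, ha, hb, hc, hd, hN⟩
    have hside {x y : α} (hxy : r₁ x y ∨ r₂ x y) : x ∈ s ↔ y ∈ s := by
      rcases hxy with h | h
      · exact iff_of_true (h₁.mem_of_rel h).1 (h₁.mem_of_rel h).2
      · exact iff_of_false (disjoint_right.1 hst (h₂.mem_of_rel h).1)
          (disjoint_right.1 hst (h₂.mem_of_rel h).2)
    obtain ⟨hac, had, hbd, -⟩ := id hN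
    have hd' := hside had
    refine (hN.hasN_or_hasN ha hb hc hd (hd'.trans (hside hbd).symm) (hside hac) hd'
      (fun x hx y hy => ?_) (fun x hx y hy => ?_)).elim ih₁ ih₂
    · simp [h₂.not_rel_of_not_mem (disjoint_left.1 hst hx)]
    · simp [h₁.not_rel_of_not_mem (disjoint_right.1 hst hx)]

/-- Take for `U` the elements lying above everything on the other side of the split: it contains
a maximal element but not the elements on the other side of that one, and transitivity through
the other side puts all of `U` above the rest. -/
theorem exists_forall_rel_of_isSplit_compl_symmGen [IsStrictOrder α r] {A : Finset α}
    (hA : IsSplit (Cograph.compl (Relation.SymmGen r)) s A) :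
    ∃ U ⊆ s, U.Nonempty ∧ (s \ U).Nonempty ∧ ∀ u ∈ U, ∀ l ∈ s \ U, r u l := by
  classical
  have hcross : ∀ x ∈ A, ∀ y ∈ s \ A, Relation.SymmGen r x y := fun x hx y hy =>
    not_not.1 fun h => hA.2.2.2 x hx y hy ⟨fun e => (mem_sdiff.1 hy).2 (e ▸ hx), h⟩
  have hcomp : ∀ x ∈ s, ∀ y ∈ s, (x ∈ A ↔ y ∉ A) → r x y ∨ r y x := by
    intro x hx y hy hxy
    by_cases hxA : x ∈ A
    · exact hcross x hxA y (mem_sdiff.2 ⟨hy, hxy.1 hxA⟩)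
    · exact (hcross y (not_not.1 (hxy.not.1 hxA)) x (mem_sdiff.2 ⟨hx, hxA⟩)).symm
  set U := s.filter fun x => ∀ y ∈ s, (x ∈ A ↔ y ∉ A) → r x y
  obtain ⟨x₀, hx₀, hmax⟩ : ∃ x ∈ s, ∀ y ∈ s, ¬ r y x := by
    let := partialOrderOfSO r
    obtain ⟨x, hx⟩ := s.exists_minimal (hA.2.1.mono hA.1)
    exact ⟨x, hx.prop, fun y hy => hx.not_lt hy⟩
  obtain ⟨y₀, hy₀, hx₀y₀⟩ : ∃ y ∈ s, (x₀ ∈ A ↔ y ∉ A) := by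
    by_cases hx₀A : x₀ ∈ A
    · obtain ⟨y, hy⟩ := hA.2.2.1
      exact ⟨y, (mem_sdiff.1 hy).1, iff_of_true hx₀A (mem_sdiff.1 hy).2⟩
    · obtain ⟨y, hy⟩ := hA.2.1
      exact ⟨y, hA.1 hy, iff_of_false hx₀A (not_not.2 hy)⟩
  have hx₀U : x₀ ∈ U := mem_filter.2
    ⟨hx₀, fun y hy h => (hcomp x₀ hx₀ y hy h).resolve_right (hmax y hy)⟩
  have hy₀U : y₀ ∉ U := fun h => hmax y₀ hy₀ ((mem_filter.1 h).2 x₀ hx₀ (by tauto))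
  refine ⟨U, filter_subset _ _, ⟨x₀, hx₀U⟩, ⟨y₀, mem_sdiff.2 ⟨hy₀, hy₀U⟩⟩, fun u hu l hl => ?_⟩
  obtain ⟨hls, hlU⟩ := mem_sdiff.1 hl
  obtain ⟨-, hu⟩ := mem_filter.1 hu
  simp only [U, mem_filter, hls, true_and, not_forall] at hlU
  obtain ⟨y, hy, hly, hnot⟩ := hlU
  by_cases hul : u ∈ A ↔ l ∉ A
  · exact hu l hls hul
  · exact _root_.trans (hu y hy (by tauto)) ((hcomp l hls y hy hly).resolve_left hnot)

theorem IsVSP.of_isSplit_symmGen {A : Finset α} (hsupp : ∀ a b, r a b → a ∈ s ∧ b ∈ s)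
    (hA : IsSplit (Relation.SymmGen r) s A) (h₁ : IsVSP A (restrictTo A r))
    (h₂ : IsVSP (s \ A) (restrictTo (s \ A) r)) : IsVSP s r := by
  have h := IsVSP.parallel disjoint_sdiff h₁ h₂
  rw [union_sdiff_of_subset hA.1] at h
  convert h using 1
  funext x y
  refine propext ⟨fun hxy => ?_, fun h => h.elim (·.2.2) (·.2.2)⟩
  obtain ⟨hx, hy⟩ := hsupp x y hxy
  by_cases hxA : x ∈ A
  · refine .inl ⟨hxA, not_not.1 fun hyA => ?_, hxy⟩
    exact hA.2.2.2 x hxA y (mem_sdiff.2 ⟨hy, hyA⟩) (.of_rel hxy)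
  · refine .inr ⟨mem_sdiff.2 ⟨hx, hxA⟩, mem_sdiff.2 ⟨hy, fun hyA => ?_⟩, hxy⟩
    exact hA.2.2.2 y hyA x (mem_sdiff.2 ⟨hx, hxA⟩) (.of_rel_symm hxy)

theorem IsVSP.of_forall_rel [IsStrictOrder α r] {U : Finset α}
    (hsupp : ∀ a b, r a b → a ∈ s ∧ b ∈ s) (hU : U ⊆ s) (hcross : ∀ u ∈ U, ∀ l ∈ s \ U, r u l)
    (h₁ : IsVSP U (restrictTo U r)) (h₂ : IsVSP (s \ U) (restrictTo (s \ U) r)) :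
    IsVSP s r := by
  have h := IsVSP.series disjoint_sdiff h₁ h₂
  rw [union_sdiff_of_subset hU] at h
  convert h using 1
  funext x y
  refine propext ⟨fun hxy => ?_, ?_⟩
  · obtain ⟨hx, hy⟩ := hsupp x y hxy
    by_cases hxU : x ∈ U <;> by_cases hyU : y ∈ U
    · exact .inl ⟨hxU, hyU, hxy⟩
    · exact .inr (.inr ⟨hxU, mem_sdiff.2 ⟨hy, hyU⟩⟩)
    · exact (irrefl x (_root_.trans hxy (hcross y hyU x (mem_sdiff.2 ⟨hx, hxU⟩)))).elim
    · exact .inr (.inl ⟨mem_sdiff.2 ⟨hx, hxU⟩, mem_sdiff.2 ⟨hy, hyU⟩, hxy⟩)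
  · rintro (h | h | ⟨hx, hy⟩)
    exacts [h.2.2, h.2.2, hcross x hx y hy]

theorem isVSP_of_not_hasN [IsStrictOrder α r] (hs : s.Nonempty)
    (hsupp : ∀ a b, r a b → a ∈ s ∧ b ∈ s) (hN : ¬ HasN s r) : IsVSP s r := by
  induction s using Finset.strongInduction generalizing r with
  | H s ih =>
  obtain ⟨a, rfl⟩ | hs := hs.exists_eq_singleton_or_nontrivial
  · have hr : r = fun _ _ => False := by
      funext x y
      refine propext ⟨fun hxy => ?_, False.elim⟩
      obtain ⟨hx, hy⟩ := hsupp x y hxy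
      rw [mem_singleton] at hx hy
      subst hx hy
      exact irrefl _ hxy
    exact hr ▸ .single a
  have ih' (t : Finset α) (hts : t ⊂ s) (ht : t.Nonempty) : IsVSP t (restrictTo t r) :=
    ih t hts ht (fun _ _ h => ⟨h.1, h.2.1⟩) fun h => hN (h.of_restrictTo hts.subset)
  obtain ⟨A, hA | hA⟩ := exists_isSplit_or_isSplit_compl
    (fun h => hN (hasN_of_hasP4_symmGen h)) hs
  · exact .of_isSplit_symmGen hsupp hA
      (ih' A (hA.1.ssubset_of_not_subset (sdiff_nonempty.1 hA.2.2.1)) hA.2.1)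
      (ih' _ (sdiff_ssubset hA.1 hA.2.1) hA.2.2.1)
  · obtain ⟨U, hUs, hU, hsU, hcross⟩ := exists_forall_rel_of_isSplit_compl_symmGen hA
    exact .of_forall_rel hsupp hUs hcross
      (ih' U (hUs.ssubset_of_not_subset (sdiff_nonempty.1 hsU)) hU)
      (ih' _ (sdiff_ssubset hUs hU) hsU)

end Poset

/-- Valdes's characterisation: a finite (nonempty) partial order is vertex-series-parallel
iff it has no four elements `a, b, c, d` with exactly the relations `a ≻ c`, `a ≻ d`,
`b ≻ d` and no other relations among them (`a ‖ b`, `b ‖ c`, `c ‖ d`): the `N`-shaped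
forbidden suborder. -/
theorem isVSP_iff_no_forbidden_suborder {α : Type*} [DecidableEq α]
    (s : Finset α) (hs : s.Nonempty) (r : α → α → Prop)
    (hsupp : ∀ a b, r a b → a ∈ s ∧ b ∈ s)
    (hirr : ∀ a, ¬ r a a) (htrans : ∀ a b c, r a b → r b c → r a c) :
    IsVSP s r ↔
      ¬ ∃ a b c d, a ∈ s ∧ b ∈ s ∧ c ∈ s ∧ d ∈ s ∧
        r a c ∧ r a d ∧ r b d ∧
        ¬ r a b ∧ ¬ r b a ∧ ¬ r b c ∧ ¬ r c b ∧ ¬ r c d ∧ ¬ r d c := by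
  have : IsStrictOrder α r := { irrefl := hirr, trans := htrans }
  exact ⟨IsVSP.not_hasN, isVSP_of_not_hasN hs hsupp⟩
end
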